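/- (Lemma 2) Let P be a positive integer, δ > 0, ε ≥ 0, μ₀ > 0, 0 < p₀ ≤ 1, and set κ = ε√P/δ; assume κ < 1. Let x₁, x₂ ∈ ℝ^P be two points from different clusters, i.e. ‖x₁ − x₂‖₂ ≥ δ and μ(x₁ − x₂) = P‖x₁ − x₂‖_∞²/‖x₁ − x₂‖₂² ≤ μ₀. Let Ω₁, Ω₂ ⊆ {1,…,P} be independent random observation patterns in which each coordinate is observed independently with probability p₀. Then the probability that there exists u ∈ ℝ^P with |x₁[j] − u[j]| ≤ ε/2 for all j ∈ Ω₁ and |x₂[j] − u[j]| ≤ ε/2 for all j ∈ Ω₂ is at most β₀ = 1 − (1 − δ₀)(1 − γ₀), where γ₀ = (e/2)^(−p₀²P/2) and δ₀ = e^(−p₀²P(1−κ²)²/μ₀²). -/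

import Mathlib

/-!
If `u` is within `ε/2` of `x₁` on `Ω₁` and of `x₂` on `Ω₂`, then no coordinate `j` with
`|x₁ j - x₂ j| > ε` is observed in both patterns, an event of probability
`(1 - p₀²)^n ≤ exp(-p₀² n)`, where `n` is the number of such coordinates. The coordinates with
`|x₁ j - x₂ j| ≤ ε` carry at most `Pε² = κ²δ² ≤ κ²‖x₁ - x₂‖₂²` of the squared distance, and each
of the others at most `‖x₁ - x₂‖_∞² ≤ μ₀‖x₁ - x₂‖₂²/P`, so `n ≥ (1 - κ²)P/μ₀ ≥ (1 - κ²)²P/μ₀²`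
(a coherence is always at least `1`). Hence the probability is at most `δ₀ ≤ β₀`.
-/

open MeasureTheory Finset
open scoped ENNReal NNReal

section Coherence

variable {ι : Type*} [Fintype ι]

noncomputable def coherence (d : ι → ℝ) : ℝ := Fintype.card ι * ‖d‖ ^ 2 / ∑ j, d j ^ 2

lemma sq_le_pi_norm_sq (d : ι → ℝ) (j : ι) : d j ^ 2 ≤ ‖d‖ ^ 2 := by
  simpa only [Real.norm_eq_abs, sq_abs] using
    pow_le_pow_left₀ (norm_nonneg _) (norm_le_pi_norm d j) 2

lemma sum_sq_le_card_mul_norm_sq (d : ι → ℝ) : ∑ j, d j ^ 2 ≤ Fintype.card ι * ‖d‖ ^ 2 := by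
  simpa using sum_le_sum fun j (_ : j ∈ univ) => sq_le_pi_norm_sq d j

lemma one_le_coherence {d : ι → ℝ} (hd : 0 < ∑ j, d j ^ 2) : 1 ≤ coherence d :=
  (one_le_div hd).mpr (sum_sq_le_card_mul_norm_sq d)

lemma sum_sq_sub_card_mul_sq_le_card_mul_norm_sq (d : ι → ℝ) (ε : ℝ) :
    ∑ j, d j ^ 2 - Fintype.card ι * ε ^ 2 ≤ #{j | ε < |d j|} * ‖d‖ ^ 2 := by
  have hsmall : ∑ j ∈ {j | ¬ε < |d j|}, d j ^ 2 ≤ Fintype.card ι * ε ^ 2 := calc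
    _ ≤ ∑ j ∈ {j | ¬ε < |d j|}, ε ^ 2 := sum_le_sum fun j hj => by
        rw [← sq_abs]
        exact pow_le_pow_left₀ (abs_nonneg _) (not_lt.mp (mem_filter.mp hj).2) 2
    _ ≤ ∑ _j, ε ^ 2 := sum_le_sum_of_subset_of_nonneg (subset_univ _) fun _ _ _ => sq_nonneg _
    _ = _ := by simp
  have hlarge : ∑ j ∈ {j | ε < |d j|}, d j ^ 2 ≤ #{j | ε < |d j|} * ‖d‖ ^ 2 := by
    simpa using sum_le_sum fun j (_ : j ∈ ({j | ε < |d j|} : Finset ι)) => sq_le_pi_norm_sq d j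
  linarith [sum_filter_add_sum_filter_not univ (fun j => ε < |d j|) fun j => d j ^ 2]

lemma one_sub_sq_mul_card_le_card_mul_coherence (d : ι → ℝ) {δ ε : ℝ} (hδ : 0 < δ)
    (hsep : δ ≤ √(∑ j, d j ^ 2)) :
    (1 - (ε * √(Fintype.card ι) / δ) ^ 2) * Fintype.card ι ≤
      #{j | ε < |d j|} * coherence d := by
  have hlarge := sum_sq_sub_card_mul_sq_le_card_mul_norm_sq d ε
  set S := ∑ j, d j ^ 2
  set P : ℝ := (Fintype.card ι : ℝ)
  have hδS : δ ^ 2 ≤ S := (Real.le_sqrt hδ.le (by positivity)).mp hsep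
  have hS : 0 < S := (pow_pos hδ 2).trans_le hδS
  have hκ : P * ε ^ 2 ≤ (ε * √P / δ) ^ 2 * S := by
    rw [div_pow, mul_pow, Real.sq_sqrt (Nat.cast_nonneg _), div_mul_eq_mul_div,
      le_div_iff₀ (by positivity)]
    nlinarith [mul_le_mul_of_nonneg_left hδS (by positivity : 0 ≤ ε ^ 2 * P)]
  rw [coherence, mul_div_assoc', le_div_iff₀ hS]
  calc (1 - (ε * √P / δ) ^ 2) * P * S = P * ((1 - (ε * √P / δ) ^ 2) * S) := by ring
    _ ≤ P * (#{j | ε < |d j|} * ‖d‖ ^ 2) :=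
      mul_le_mul_of_nonneg_left (by linarith) (Nat.cast_nonneg _)
    _ = #{j | ε < |d j|} * (P * ‖d‖ ^ 2) := by ring

end Coherence

section Bernoulli

variable {ι : Type*} [Fintype ι] (q : ℝ≥0) (hq : q ≤ 1)

lemma bernoulli_prod_bernoulli_not_both_true :
    ((PMF.bernoulli q hq).toMeasure.prod (PMF.bernoulli q hq).toMeasure)
      {b : Bool × Bool | ¬(b.1 = true ∧ b.2 = true)} = ENNReal.ofReal (1 - q ^ 2) := by
  have hcompl : {b : Bool × Bool | ¬(b.1 = true ∧ b.2 = true)} = ({true} ×ˢ {true})ᶜ := by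
    ext ⟨a, b⟩; simp
  have htrue : (PMF.bernoulli q hq).toMeasure {true} = q := by
    rw [PMF.toMeasure_apply_singleton _ _ (measurableSet_singleton true)]
    exact PMF.bernoulli_apply hq true
  rw [hcompl, prob_compl_eq_one_sub (.prod (.singleton true) (.singleton true)),
    Measure.prod_prod, htrue, ENNReal.ofReal_sub _ (by positivity), ENNReal.ofReal_one,
    ← NNReal.coe_pow, ENNReal.ofReal_coe_nnreal, ENNReal.coe_pow, sq]

lemma pi_bernoulli_prod_pi_bernoulli_forall_not_both_true (T : Finset ι) :
    ((Measure.pi fun _ : ι => (PMF.bernoulli q hq).toMeasure).prod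
        (Measure.pi fun _ : ι => (PMF.bernoulli q hq).toMeasure))
      {ω : (ι → Bool) × (ι → Bool) | ∀ j ∈ T, ¬(ω.1 j = true ∧ ω.2 j = true)} =
      ENNReal.ofReal ((1 - q ^ 2) ^ #T) := by
  rw [← (measurePreserving_arrowProdEquivProdArrow Bool Bool ι _ _).map_eq,
    MeasurableEquiv.map_apply]
  change Measure.pi _ ((T : Set ι).pi fun _ => {b : Bool × Bool | ¬(b.1 = true ∧ b.2 = true)})
    = _
  rw [Measure.pi_pi_finset, prod_const, bernoulli_prod_bernoulli_not_both_true,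
    ENNReal.ofReal_pow (by simpa using hq)]

end Bernoulli

lemma common_center_subset_forall_not_both_observed {ι : Type*} [Fintype ι] (x₁ x₂ : ι → ℝ)
    (ε : ℝ) :
    {ω : (ι → Bool) × (ι → Bool) | ∃ u : ι → ℝ,
        (∀ j, ω.1 j = true → |x₁ j - u j| ≤ ε / 2) ∧
        (∀ j, ω.2 j = true → |x₂ j - u j| ≤ ε / 2)} ⊆
      {ω | ∀ j ∈ ({j | ε < |x₁ j - x₂ j|} : Finset ι), ¬(ω.1 j = true ∧ ω.2 j = true)} := by
  rintro ω ⟨u, h₁, h₂⟩ j hj ⟨hj₁, hj₂⟩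
  have htri := abs_sub_le (x₁ j) (u j) (x₂ j)
  rw [abs_sub_comm (u j)] at htri
  linarith [(mem_filter.mp hj).2, h₁ j hj₁, h₂ j hj₂]

lemma one_sub_pow_le_exp_neg_mul {t : ℝ} (ht : t ≤ 1) (n : ℕ) :
    (1 - t) ^ n ≤ Real.exp (-(t * n)) := calc
  (1 - t) ^ n ≤ Real.exp (-t) ^ n :=
    pow_le_pow_left₀ (sub_nonneg.mpr ht) (Real.one_sub_le_exp_neg t) n
  _ = Real.exp (-(t * n)) := by rw [← Real.exp_nat_mul]; ring_nf

lemma mul_sq_div_sq_le_of_mul_le {a μ P n : ℝ} (ha : 0 ≤ a) (haμ : a ≤ μ) (hμ : 0 < μ)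
    (hP : 0 ≤ P) (h : a * P ≤ n * μ) : P * a ^ 2 / μ ^ 2 ≤ n := calc
  P * a ^ 2 / μ ^ 2 = (a / μ) ^ 2 * P := by ring
  _ ≤ a / μ * P := by
    gcongr
    exact pow_le_of_le_one (by positivity) ((div_le_one hμ).mpr haμ) two_ne_zero
  _ ≤ n := by rwa [div_mul_eq_mul_div, div_le_iff₀ hμ]

lemma le_one_sub_one_sub_mul_one_sub {a b : ℝ} (ha : a ≤ 1) (hb : 0 ≤ b) :
    a ≤ 1 - (1 - a) * (1 - b) := by
  nlinarith [mul_nonneg hb (sub_nonneg.mpr ha)]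

theorem different_clusters_common_center_prob_bound_general (P : ℕ)
    (δ ε μ₀ p₀ : ℝ) (hδ : 0 < δ) (hε : 0 ≤ ε) (hμ₀ : 0 < μ₀)
    (hp0 : 0 < p₀) (hp1 : p₀ ≤ 1)
    (hκ : ε * Real.sqrt P / δ < 1)
    (x₁ x₂ : Fin P → ℝ)
    (hsep : Real.sqrt (∑ j, (x₁ j - x₂ j) ^ 2) ≥ δ)
    (hcoh : (P : ℝ) * ‖x₁ - x₂‖ ^ 2 / (∑ j, (x₁ j - x₂ j) ^ 2) ≤ μ₀) :
    (((Measure.pi fun _ : Fin P =>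
          (PMF.bernoulli (Real.toNNReal p₀) (Real.toNNReal_le_one.mpr hp1)).toMeasure).prod
        (Measure.pi fun _ : Fin P =>
          (PMF.bernoulli (Real.toNNReal p₀) (Real.toNNReal_le_one.mpr hp1)).toMeasure))
        {ω : (Fin P → Bool) × (Fin P → Bool) |
          ∃ u : Fin P → ℝ,
            (∀ j, ω.1 j = true → |x₁ j - u j| ≤ ε / 2) ∧
            (∀ j, ω.2 j = true → |x₂ j - u j| ≤ ε / 2)}) ≤
      ENNReal.ofReal
        (1 - (1 - Real.exp (-(p₀ ^ 2 * (P : ℝ) * (1 - (ε * Real.sqrt P / δ) ^ 2) ^ 2 / μ₀ ^ 2))) *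
          (1 - (Real.exp 1 / 2) ^ (-(p₀ ^ 2 * (P : ℝ) / 2)))) := by
  set κ := ε * √P / δ
  set n := #{j | ε < |x₁ j - x₂ j|}
  have hcoh' : coherence (x₁ - x₂) ≤ μ₀ := by simpa [coherence] using hcoh
  have hμ₀_one : 1 ≤ μ₀ :=
    (one_le_coherence (Real.sqrt_pos.mp (hδ.trans_le hsep))).trans hcoh'
  have hcard : (1 - κ ^ 2) * P ≤ n * μ₀ := by
    have h := one_sub_sq_mul_card_le_card_mul_coherence (x₁ - x₂) (ε := ε) hδ hsep
    rw [Fintype.card_fin] at h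
    exact h.trans (mul_le_mul_of_nonneg_left hcoh' (Nat.cast_nonneg _))
  have hexponent : P * (1 - κ ^ 2) ^ 2 / μ₀ ^ 2 ≤ n :=
    mul_sq_div_sq_le_of_mul_le (sub_nonneg.mpr (pow_le_one₀ (by positivity) hκ.le))
      (by linarith [sq_nonneg κ]) hμ₀ (Nat.cast_nonneg P) hcard
  calc _ ≤ _ := measure_mono (common_center_subset_forall_not_both_observed x₁ x₂ ε)
    _ = ENNReal.ofReal ((1 - p₀ ^ 2) ^ n) := by
      rw [pi_bernoulli_prod_pi_bernoulli_forall_not_both_true, Real.coe_toNNReal _ hp0.le]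
    _ ≤ ENNReal.ofReal (Real.exp (-(p₀ ^ 2 * n))) :=
      ENNReal.ofReal_le_ofReal (one_sub_pow_le_exp_neg_mul (pow_le_one₀ hp0.le hp1) n)
    _ ≤ ENNReal.ofReal (Real.exp (-(p₀ ^ 2 * P * (1 - κ ^ 2) ^ 2 / μ₀ ^ 2))) := by
      gcongr
      rw [mul_assoc, mul_div_assoc]
      gcongr
    _ ≤ _ := ENNReal.ofReal_le_ofReal <| le_one_sub_one_sub_mul_one_sub
      (Real.exp_le_one_iff.mpr (neg_nonpos.mpr (by positivity)))
      (Real.rpow_nonneg (by positivity) _)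

/-- **Lemma 2: a common center for two points from different clusters is unlikely.**
Let `κ = ε√P/δ < 1`, and let `x₁, x₂ ∈ ℝ^P` be points from different clusters, i.e.
`‖x₁ − x₂‖₂ ≥ δ` and coherence `μ(x₁ − x₂) = P‖x₁ − x₂‖_∞²/‖x₁ − x₂‖₂² ≤ μ₀`.  Let
`Ω₁, Ω₂` be independent random observation patterns, each coordinate observed
independently with probability `p₀`.  Then the probability that some `u ∈ ℝ^P` satisfies
`|x₁ j − u j| ≤ ε/2` on `Ω₁` and `|x₂ j − u j| ≤ ε/2` on `Ω₂` is at most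
`β₀ = 1 − (1 − δ₀)(1 − γ₀)`, where `γ₀ = (e/2)^(−p₀²P/2)` and
`δ₀ = exp(−p₀²P(1 − κ²)²/μ₀²)`. -/
theorem different_clusters_common_center_prob_bound (P : ℕ) (hP : 0 < P)
    (δ ε μ₀ p₀ : ℝ) (hδ : 0 < δ) (hε : 0 ≤ ε) (hμ₀ : 0 < μ₀)
    (hp0 : 0 < p₀) (hp1 : p₀ ≤ 1)
    (hκ : ε * Real.sqrt P / δ < 1)
    (x₁ x₂ : Fin P → ℝ)
    (hsep : Real.sqrt (∑ j, (x₁ j - x₂ j) ^ 2) ≥ δ)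
    (hcoh : (P : ℝ) * ‖x₁ - x₂‖ ^ 2 / (∑ j, (x₁ j - x₂ j) ^ 2) ≤ μ₀) :
    (((Measure.pi fun _ : Fin P =>
          (PMF.bernoulli (Real.toNNReal p₀) (Real.toNNReal_le_one.mpr hp1)).toMeasure).prod
        (Measure.pi fun _ : Fin P =>
          (PMF.bernoulli (Real.toNNReal p₀) (Real.toNNReal_le_one.mpr hp1)).toMeasure))
        {ω : (Fin P → Bool) × (Fin P → Bool) |
          ∃ u : Fin P → ℝ,
            (∀ j, ω.1 j = true → |x₁ j - u j| ≤ ε / 2) ∧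
            (∀ j, ω.2 j = true → |x₂ j - u j| ≤ ε / 2)}) ≤
      ENNReal.ofReal
        (1 - (1 - Real.exp (-(p₀ ^ 2 * (P : ℝ) * (1 - (ε * Real.sqrt P / δ) ^ 2) ^ 2 / μ₀ ^ 2))) *
          (1 - (Real.exp 1 / 2) ^ (-(p₀ ^ 2 * (P : ℝ) / 2)))) :=
  different_clusters_common_center_prob_bound_general P δ ε μ₀ p₀ hδ hε hμ₀ hp0 hp1 hκ x₁ x₂ hsep
    hcoh
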